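/- arXiv:2206.05105 — 5 statements merged into one kernel-verified Lean document; each statement's English description precedes it below -/
import Mathlib

section
/- If f ∈ L¹(T) and the function x ↦ f(x)/x is integrable on (−π, π), then the partial sums Σ_{n=−M}^{N} a_n(f) tend to 0 as M → ∞ and N → ∞ independently. -/
open MeasureTheory Filter Real Set

/-- The `n`-th Fourier coefficient of a `2π`-periodic function `f : ℝ → ℂ`,
`a_n(f) = (1/(2π)) ∫_{-π}^{π} f(x) e^{-inx} dx`. -/
noncomputable def fourierCoef (f : ℝ → ℂ) (n : ℤ) : ℂ :=
  (1 / (2 * π)) • ∫ x in (-π)..π, f x * Complex.exp (-Complex.I * (n : ℂ) * (x : ℂ))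

/-!
With `z = e^{-ix}` the geometric sum `∑_{n=-M}^{N} z^n` equals `(z^{-M} - z^{N+1}) / (1 - z)`, so
`∑_{n=-M}^{N} a_n(f)` is `1/(2π)` times the difference of the Fourier integrals of
`g(x) = f(x) / (1 - e^{-ix})` at the frequencies `-M` and `N + 1`. Since
`|1 - e^{-ix}| ≥ 2|x|/π` on `[-π, π]`, `g` is integrable as soon as `f(x)/x` is, and both
integrals tend to `0` by the Riemann–Lebesgue lemma.
-/

open Topology

theorem Finset.one_sub_mul_sum_Icc_zpow {K : Type*} [DivisionRing K] {z : K} (hz : z ≠ 0)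
    {a b : ℤ} (hab : a ≤ b + 1) :
    (1 - z) * ∑ n ∈ Finset.Icc a b, z ^ n = z ^ a - z ^ (b + 1) := by
  induction b, (by omega : a - 1 ≤ b) using Int.leInduction with
  | base => simp
  | succ b hb ih =>
    rw [← Finset.insert_Icc_right_eq_Icc_add_one (by omega), Finset.sum_insert (by simp),
      mul_add, ih (by omega), zpow_add_one₀ hz (b + 1), ← (Commute.self_zpow₀ z (b + 1)).eq]
    noncomm_ring

section

open Complex

theorem sum_Icc_exp_neg_I_mul {x : ℝ} (hx : exp (-I * x) ≠ 1) {a b : ℤ} (hab : a ≤ b + 1) :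
    ∑ n ∈ Finset.Icc a b, exp (-I * n * x) =
      (exp (-I * (a : ℝ) * x) - exp (-I * ((b + 1 : ℝ) : ℂ) * x)) / (1 - exp (-I * x)) := by
  have hpow (n : ℤ) : exp (-I * n * x) = exp (-I * x) ^ n := by
    rw [← exp_int_mul]; ring_nf
  have hb : ((b + 1 : ℝ) : ℂ) = ((b + 1 : ℤ) : ℂ) := by push_cast; rfl
  rw [ofReal_intCast, hb]
  simp only [hpow]
  rw [eq_div_iff (sub_ne_zero.2 hx.symm), mul_comm,
    Finset.one_sub_mul_sum_Icc_zpow (Complex.exp_ne_zero _) hab]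

theorem two_div_pi_mul_abs_le_norm_one_sub_exp {x : ℝ} (hx : |x| ≤ π) :
    2 / π * |x| ≤ ‖1 - exp (-I * x)‖ := by
  have h : |x / 2| ≤ π / 2 := by rw [abs_div, abs_two]; linarith
  calc 2 / π * |x| = 2 * (2 / π * |x / 2|) := by rw [abs_div, abs_two]; ring
    _ ≤ 2 * |Real.sin (x / 2)| := by gcongr; exact mul_abs_le_abs_sin h
    _ = ‖1 - exp (-I * x)‖ := by
      rw [norm_sub_rev, show -I * x = I * ((-x : ℝ) : ℂ) by push_cast; ring,
        norm_exp_I_mul_ofReal_sub_one, neg_div, Real.sin_neg, norm_mul, norm_neg]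
      simp

theorem exp_neg_I_mul_ne_one {x : ℝ} (hx : |x| ≤ π) (hx0 : x ≠ 0) : exp (-I * x) ≠ 1 := by
  intro h
  have hle := two_div_pi_mul_abs_le_norm_one_sub_exp hx
  rw [h, sub_self, norm_zero] at hle
  have hpos : 0 < 2 / π * |x| := by positivity
  linarith

theorem norm_ofReal_div_one_sub_exp_le {x : ℝ} (hx : |x| ≤ π) :
    ‖(x : ℂ) / (1 - exp (-I * x))‖ ≤ π / 2 := by
  rcases eq_or_ne x 0 with rfl | hx0
  · simp only [ofReal_zero, zero_div, norm_zero]; positivity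
  have hpos : 0 < 2 / π * |x| := by positivity
  rw [norm_div, norm_real, norm_eq_abs,
    div_le_iff₀ (hpos.trans_le (two_div_pi_mul_abs_le_norm_one_sub_exp hx))]
  calc |x| = π / 2 * (2 / π * |x|) := by field_simp
    _ ≤ π / 2 * ‖1 - exp (-I * x)‖ := by gcongr; exact two_div_pi_mul_abs_le_norm_one_sub_exp hx

theorem integrableOn_div_one_sub_exp {f : ℝ → ℂ}
    (hf : IntegrableOn (fun x => f x / x) (Ioc (-π) π)) :
    IntegrableOn (fun x => f x / (1 - exp (-I * x))) (Ioc (-π) π) := by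
  have hbdd : ∀ᵐ x : ℝ ∂volume.restrict (Ioc (-π) π),
      ‖(x : ℂ) / (1 - exp (-I * x))‖ ≤ π / 2 :=
    (ae_restrict_mem measurableSet_Ioc).mono fun x hx =>
      norm_ofReal_div_one_sub_exp_le (abs_le.2 ⟨hx.1.le, hx.2⟩)
  refine (hf.mul_bdd (by fun_prop : Measurable _).aestronglyMeasurable hbdd).congr
    (ae_of_all _ fun x => ?_)
  rcases eq_or_ne x 0 with rfl | hx0
  · simp
  · exact div_mul_div_cancel₀ (ofReal_ne_zero.2 hx0)

theorem MeasureTheory.IntegrableOn.mul_exp_neg_I_mul {g : ℝ → ℂ} {s : Set ℝ}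
    (hg : IntegrableOn g s) (t : ℝ) : IntegrableOn (fun x => g x * exp (-I * t * x)) s :=
  hg.mul_bdd (c := 1) (by fun_prop) (ae_of_all _ fun x => by simp [norm_exp])

theorem tendsto_setIntegral_mul_exp_neg_I_mul_cocompact (g : ℝ → ℂ) {s : Set ℝ}
    (hs : MeasurableSet s) :
    Tendsto (fun t : ℝ => ∫ x in s, g x * exp (-I * t * x)) (cocompact ℝ) (𝓝 0) := by
  have h := (Real.tendsto_integral_exp_smul_cocompact (s.indicator g)).comp
    (tendsto_cocompact_mul_right₀ (inv_ne_zero two_pi_pos.ne'))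
  refine h.congr fun t => ?_
  rw [Function.comp_apply, ← integral_indicator hs]
  congr 1 with x
  by_cases hx : x ∈ s
  · rw [indicator_of_mem hx, indicator_of_mem hx, Circle.smul_def, Real.fourierChar_apply,
      smul_eq_mul, mul_comm]
    congr 2
    push_cast
    field_simp
  · simp [hx]

theorem sum_Icc_fourierCoef_eq {f : ℝ → ℂ} (hf : IntegrableOn f (Ioc (-π) π))
    (hg : IntegrableOn (fun x => f x / (1 - exp (-I * x))) (Ioc (-π) π))
    {a b : ℤ} (hab : a ≤ b + 1) :
    ∑ n ∈ Finset.Icc a b, fourierCoef f n = (1 / (2 * π)) •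
      ((∫ x in Ioc (-π) π, f x / (1 - exp (-I * x)) * exp (-I * (a : ℝ) * x)) -
        ∫ x in Ioc (-π) π, f x / (1 - exp (-I * x)) * exp (-I * ((b + 1 : ℝ) : ℂ) * x)) := by
  have hπ : -π ≤ π := by linarith [pi_pos]
  have hint (n : ℤ) : IntervalIntegrable (fun x => f x * exp (-I * n * x)) volume (-π) π :=
    (intervalIntegrable_iff_integrableOn_Ioc_of_le hπ).2 (by simpa using hf.mul_exp_neg_I_mul n)
  simp only [fourierCoef, ← Finset.smul_sum]
  rw [← intervalIntegral.integral_finsetSum fun n _ => hint n, intervalIntegral.integral_of_le hπ,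
    ← integral_sub (hg.mul_exp_neg_I_mul _) (hg.mul_exp_neg_I_mul _)]
  congr 1
  refine setIntegral_congr_ae measurableSet_Ioc ?_
  filter_upwards [Measure.ae_ne volume 0] with x hx0 hx
  rw [← Finset.mul_sum,
    sum_Icc_exp_neg_I_mul (exp_neg_I_mul_ne_one (abs_le.2 ⟨hx.1.le, hx.2⟩) hx0) hab]
  ring

end

theorem sum_fourierCoef_tendsto_zero_general (f : ℝ → ℂ)
    (hf : IntegrableOn f (Ioc (-π) π))
    (hdiv : IntegrableOn (fun x => f x / (x : ℂ)) (Ioo (-π) π)) :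
    Tendsto (fun MN : ℕ × ℕ =>
        ∑ n ∈ Finset.Icc (-(MN.1 : ℤ)) (MN.2 : ℤ), fourierCoef f n)
      atTop (nhds 0) := by
  have hg := integrableOn_div_one_sub_exp ((integrableOn_Ioc_iff_integrableOn_Ioo).2 hdiv)
  have hM : Tendsto (fun M : ℕ => -(M : ℝ)) atTop (cocompact ℝ) :=
    (tendsto_neg_atTop_atBot.comp tendsto_natCast_atTop_atTop).mono_right atBot_le_cocompact
  have hN : Tendsto (fun N : ℕ => (N : ℝ) + 1) atTop (cocompact ℝ) :=
    (tendsto_atTop_add_const_right _ 1 tendsto_natCast_atTop_atTop).mono_right atTop_le_cocompact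
  have hRL := tendsto_setIntegral_mul_exp_neg_I_mul_cocompact
    (fun x => f x / (1 - Complex.exp (-Complex.I * x))) (measurableSet_Ioc (a := -π) (b := π))
  have hlim := (((hRL.comp hM).comp tendsto_fst).sub ((hRL.comp hN).comp tendsto_snd)).const_smul
    (1 / (2 * π))
  rw [sub_zero, smul_zero, prod_atTop_atTop_eq] at hlim
  refine hlim.congr fun MN => ?_
  rw [sum_Icc_fourierCoef_eq hf hg (by omega), Int.cast_neg, Int.cast_natCast, Int.cast_natCast]
  rfl

/-- If `f ∈ L¹(T)` and `x ↦ f(x)/x` is integrable on `(-π, π)`, then the partial sums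
`∑_{n=-M}^{N} a_n(f)` tend to `0` as `M → ∞` and `N → ∞` independently. -/
theorem sum_fourierCoef_tendsto_zero (f : ℝ → ℂ) (hper : Function.Periodic f (2 * π))
    (hf : IntegrableOn f (Ioc (-π) π))
    (hdiv : IntegrableOn (fun x => f x / (x : ℂ)) (Ioo (-π) π)) :
    Tendsto (fun MN : ℕ × ℕ =>
        ∑ n ∈ Finset.Icc (-(MN.1 : ℤ)) (MN.2 : ℤ), fourierCoef f n)
      atTop (nhds 0) :=
  sum_fourierCoef_tendsto_zero_general f hf hdiv
end

section
/- Principle of localization: if f, g ∈ L¹(T) and f = g almost everywhere on an open interval I ⊂ T, then for each point t ∈ I the Fourier series of f and g are equi-convergent at t: Σ_{n=−M}^{N} (a_n(f) − a_n(g)) e^{int} → 0 as M → ∞ and N → ∞ independently. -/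
/-!
Put `h = f - g`. Its partial Fourier sum at `t` is the integral of `h(x)` against
`∑_{n=-M}^{N} e^{in(t-x)}` over the period `[t - π, t + π]`, and summing this geometric series
turns the integrand into `h(x) (e^{i(N+1)(t-x)} - e^{-iM(t-x)}) / (e^{i(t-x)} - 1)`. Since `h`
vanishes near `t`, the quotient `h(x) / (e^{i(t-x)} - 1)` is integrable, so the partial sum is a
difference of two Fourier integrals of one integrable function, and both tend to `0` by the
Riemann–Lebesgue lemma.
-/

open MeasureTheory Filter Real Set

theorem geom_sum_Icc_zpow_mul {K : Type*} [Field K] {z : K} (hz : z ≠ 0) {a b : ℤ}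
    (hab : a ≤ b + 1) : (∑ n ∈ Finset.Icc a b, z ^ n) * (z - 1) = z ^ (b + 1) - z ^ a := by
  induction b, (by omega : a - 1 ≤ b) using Int.leInduction with
  | base => simp
  | succ b hb ih =>
    rw [← Finset.insert_Icc_right_eq_Icc_add_one (by omega), Finset.sum_insert (by simp),
      add_mul, ih (by omega), zpow_add_one₀ hz (b + 1)]
    ring

theorem sum_Icc_exp_I_mul_mul_sub_one {a b : ℤ} (hab : a ≤ b + 1) (u : ℂ) :
    (∑ n ∈ Finset.Icc a b, Complex.exp (Complex.I * n * u)) * (Complex.exp (Complex.I * u) - 1)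
      = Complex.exp (Complex.I * (b + 1 : ℤ) * u) - Complex.exp (Complex.I * a * u) := by
  have hpow (m : ℤ) : Complex.exp (Complex.I * m * u) = Complex.exp (Complex.I * u) ^ m := by
    rw [← Complex.exp_int_mul]; ring_nf
  simp only [hpow]
  exact geom_sum_Icc_zpow_mul (Complex.exp_ne_zero _) hab

theorem periodic_exp_I_mul_int_mul (n : ℤ) :
    Function.Periodic (fun u : ℝ => Complex.exp (Complex.I * n * u)) (2 * π) := fun u => by
  dsimp only
  rw [show Complex.I * n * ((u + 2 * π : ℝ) : ℂ) = Complex.I * n * u + n * (2 * π * Complex.I) by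
    push_cast; ring, Complex.exp_add, Complex.exp_int_mul_two_pi_mul_I, mul_one]

theorem Complex.exp_I_mul_ne_one {u : ℝ} (h0 : u ≠ 0) (hu : |u| < 2 * π) :
    Complex.exp (Complex.I * u) ≠ 1 := by
  rw [Ne, Complex.exp_eq_one_iff]
  rintro ⟨n, hn⟩
  have hun : u = n * (2 * π) := by simpa using congrArg Complex.im hn
  have hn0 : n ≠ 0 := by rintro rfl; simp_all
  have : (1 : ℝ) ≤ |(n : ℝ)| := by exact_mod_cast Int.one_le_abs hn0
  rw [hun, abs_mul, abs_of_pos two_pi_pos] at hu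
  nlinarith [two_pi_pos]

theorem exp_I_mul_sub_ne_one {t x : ℝ} (hxt : x ≠ t) (hx : x ∈ Icc (t - π) (t + π)) :
    Complex.exp (Complex.I * (t - x)) ≠ 1 := by
  have hdist : |t - x| < 2 * π := by rw [abs_lt]; constructor <;> linarith [hx.1, hx.2, pi_pos]
  exact_mod_cast Complex.exp_I_mul_ne_one (sub_ne_zero.2 hxt.symm) hdist

theorem IntegrableOn.mul_continuousOn_diff_of_ae_eq_zero {X R : Type*} [TopologicalSpace X]
    [MeasurableSpace X] [OpensMeasurableSpace X] [T2Space X] [NormedRing R]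
    [SecondCountableTopologyEither X R] {μ : Measure X} {f g : X → R} {s U : Set X}
    (hf : IntegrableOn f s μ) (hg : ContinuousOn g (s \ U)) (hs : IsCompact s) (hU : IsOpen U)
    (hzero : ∀ᵐ x ∂μ.restrict U, f x = 0) : IntegrableOn (fun x => f x * g x) s μ := by
  have hout : IntegrableOn (fun x => f x * g x) (s \ U) μ :=
    (hf.mono_set sdiff_subset).mul_continuousOn hg (hs.diff hU)
  have hin : IntegrableOn (fun x => f x * g x) U μ :=
    integrableOn_zero.congr_fun_ae (by filter_upwards [hzero] with x hx; simp [hx])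
  exact (hout.union hin).mono_set (by simp)

theorem tendsto_setIntegral_mul_exp_cocompact (ψ : ℝ → ℂ) {s : Set ℝ} (hs : MeasurableSet s) :
    Tendsto (fun ξ : ℝ => ∫ x in s, ψ x * Complex.exp (Complex.I * ξ * x)) (cocompact ℝ)
      (nhds 0) := by
  have hscale : Tendsto (fun ξ : ℝ => -(2 * π)⁻¹ * ξ) (cocompact ℝ) (cocompact ℝ) :=
    tendsto_cocompact_mul_left₀ (by simp [pi_ne_zero])
  refine ((Real.tendsto_integral_exp_smul_cocompact (s.indicator ψ)).comp hscale).congr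
    fun ξ => ?_
  rw [← integral_indicator hs]
  refine integral_congr_ae (ae_of_all _ fun x => ?_)
  by_cases hx : x ∈ s
  · simp only [indicator_of_mem hx, Circle.smul_def, Real.fourierChar_apply, smul_eq_mul]
    rw [mul_comm]
    congr 2
    push_cast
    field_simp
  · simp [hx]

theorem tendsto_intervalIntegral_mul_exp_sub_cocompact (φ : ℝ → ℂ) (t a b : ℝ) :
    Tendsto (fun ξ : ℝ => ∫ x in a..b, φ x * Complex.exp (Complex.I * ξ * (t - x)))
      (cocompact ℝ) (nhds 0) := by
  have hsubst : ∀ ξ : ℝ, ∫ x in a..b, φ x * Complex.exp (Complex.I * ξ * (t - x))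
      = ∫ u in t - b..t - a, φ (t - u) * Complex.exp (Complex.I * ξ * u) := fun ξ => by
    simp [← intervalIntegral.integral_comp_sub_left]
  simp_rw [hsubst, intervalIntegral]
  simpa using (tendsto_setIntegral_mul_exp_cocompact _ measurableSet_Ioc).sub
    (tendsto_setIntegral_mul_exp_cocompact _ measurableSet_Ioc)

theorem fourierCoef_sub {f g : ℝ → ℂ} (hf : IntervalIntegrable f volume (-π) π)
    (hg : IntervalIntegrable g volume (-π) π) (n : ℤ) :
    fourierCoef (f - g) n = fourierCoef f n - fourierCoef g n := by
  simp only [fourierCoef, ← smul_sub, Pi.sub_apply, sub_mul]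
  refine congrArg _ (intervalIntegral.integral_sub (hf.mul_continuousOn ?_)
    (hg.mul_continuousOn ?_)) <;> fun_prop

theorem sum_fourierCoef_mul_exp {h : ℝ → ℂ} (hh : IntervalIntegrable h volume (-π) π)
    (s : Finset ℤ) (t : ℝ) :
    ∑ n ∈ s, fourierCoef h n * Complex.exp (Complex.I * n * t)
      = (1 / (2 * π)) • ∫ x in (-π)..π,
          h x * ∑ n ∈ s, Complex.exp (Complex.I * n * (t - x)) := by
  simp only [fourierCoef, smul_mul_assoc, ← Finset.smul_sum, Finset.mul_sum]
  rw [intervalIntegral.integral_finsetSum fun n _ => hh.mul_continuousOn (by fun_prop)]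
  congr 1
  refine Finset.sum_congr rfl fun n _ => ?_
  rw [← intervalIntegral.integral_mul_const]
  refine intervalIntegral.integral_congr fun x _ => ?_
  simp only [mul_assoc, ← Complex.exp_add]
  ring_nf

noncomputable def dirichletQuotient (h : ℝ → ℂ) (t x : ℝ) : ℂ :=
  h x * (Complex.exp (Complex.I * (t - x)) - 1)⁻¹

theorem intervalIntegrable_dirichletQuotient {h : ℝ → ℂ} (hper : Function.Periodic h (2 * π))
    (hh : IntervalIntegrable h volume (-π) π) {U : Set ℝ} (hU : IsOpen U) {t : ℝ} (htU : t ∈ U)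
    (hzero : ∀ᵐ x ∂volume.restrict U, h x = 0) :
    IntervalIntegrable (dirichletQuotient h t) volume (t - π) (t + π) := by
  have hh' : IntervalIntegrable h volume (t - π) (t + π) :=
    hper.intervalIntegrable two_pi_pos.ne' (t := -π) (by rwa [show -π + 2 * π = π by ring]) _ _
  rw [intervalIntegrable_iff'] at hh' ⊢
  refine IntegrableOn.mul_continuousOn_diff_of_ae_eq_zero hh' (ContinuousOn.inv₀ (by fun_prop) ?_)
    isCompact_uIcc hU hzero
  rintro x ⟨hx, hxU⟩
  rw [uIcc_of_le (by linarith [pi_pos])] at hx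
  exact sub_ne_zero.2 (exp_I_mul_sub_ne_one (fun hxt => hxU (hxt ▸ htU)) hx)

theorem sum_Icc_fourierCoef_mul_exp_eq {h : ℝ → ℂ} (hper : Function.Periodic h (2 * π))
    (hh : IntervalIntegrable h volume (-π) π) {t : ℝ}
    (hφ : IntervalIntegrable (dirichletQuotient h t) volume (t - π) (t + π)) (M N : ℕ) :
    ∑ n ∈ Finset.Icc (-(M : ℤ)) N, fourierCoef h n * Complex.exp (Complex.I * n * t)
      = (1 / (2 * π)) • ((∫ x in t - π..t + π,
            dirichletQuotient h t x * Complex.exp (Complex.I * ((N + 1 : ℝ) : ℂ) * (t - x)))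
          - ∫ x in t - π..t + π,
            dirichletQuotient h t x * Complex.exp (Complex.I * ((-M : ℝ) : ℂ) * (t - x))) := by
  set D : ℝ → ℂ := fun x => ∑ n ∈ Finset.Icc (-(M : ℤ)) N, Complex.exp (Complex.I * n * (t - x))
  have hperD : Function.Periodic (fun x => h x * D x) (2 * π) := fun x => by
    simp only [D, hper x]
    refine congrArg _ (Finset.sum_congr rfl fun n _ => ?_)
    simpa using (periodic_exp_I_mul_int_mul n).const_sub t x
  have hshift := hperD.intervalIntegral_add_eq (-π) (t - π)
  rw [show -π + 2 * π = π by ring, show t - π + 2 * π = t + π by ring] at hshift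
  calc _ = (1 / (2 * π)) • ∫ x in -π..π, h x * D x := sum_fourierCoef_mul_exp hh _ t
    _ = (1 / (2 * π)) • ∫ x in t - π..t + π,
          (dirichletQuotient h t x * Complex.exp (Complex.I * ((N + 1 : ℝ) : ℂ) * (t - x))
            - dirichletQuotient h t x * Complex.exp (Complex.I * ((-M : ℝ) : ℂ) * (t - x))) := by
      rw [hshift]
      refine congrArg _ (intervalIntegral.integral_congr_ae
        ((Measure.ae_ne volume t).mono fun x hxt hx => ?_))
      rw [uIoc_of_le (by linarith [pi_pos])] at hx
      have hz : Complex.exp (Complex.I * (t - x)) - 1 ≠ 0 :=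
        sub_ne_zero.2 (exp_I_mul_sub_ne_one hxt (Ioc_subset_Icc_self hx))
      have hD := sum_Icc_exp_I_mul_mul_sub_one (a := -M) (b := N) (by omega) (t - x)
      push_cast at hD ⊢
      rw [dirichletQuotient, ← mul_sub, ← hD, mul_comm _ (Complex.exp _ - 1), mul_assoc,
        inv_mul_cancel_left₀ hz]
    _ = _ := congrArg _ (intervalIntegral.integral_sub (hφ.mul_continuousOn (by fun_prop))
          (hφ.mul_continuousOn (by fun_prop)))

theorem localization_principle_general (f g : ℝ → ℂ)
    (hfper : Function.Periodic f (2 * π)) (hgper : Function.Periodic g (2 * π))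
    (hf : IntegrableOn f (Ioc (-π) π)) (hg : IntegrableOn g (Ioc (-π) π))
    (c d : ℝ)
    (heq : ∀ᵐ x ∂(volume.restrict (Ioo c d)), f x = g x)
    (t : ℝ) (ht : t ∈ Ioo c d) :
    Tendsto (fun MN : ℕ × ℕ =>
        ∑ n ∈ Finset.Icc (-(MN.1 : ℤ)) (MN.2 : ℤ),
          (fourierCoef f n - fourierCoef g n) * Complex.exp (Complex.I * (n : ℂ) * (t : ℂ)))
      atTop (nhds 0) := by
  have hperiod : -π ≤ π := by linarith [pi_pos]
  have hf' := (intervalIntegrable_iff_integrableOn_Ioc_of_le hperiod).2 hf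
  have hg' := (intervalIntegrable_iff_integrableOn_Ioc_of_le hperiod).2 hg
  have hzero : ∀ᵐ x ∂volume.restrict (Ioo c d), (f - g) x = 0 :=
    heq.mono fun x hx => sub_eq_zero.2 hx
  have hφ := intervalIntegrable_dirichletQuotient (hfper.sub hgper) (hf'.sub hg') isOpen_Ioo ht
    hzero
  have hR := tendsto_intervalIntegral_mul_exp_sub_cocompact (dirichletQuotient (f - g) t) t
    (t - π) (t + π)
  have hfst : Tendsto (Prod.fst : ℕ × ℕ → ℕ) atTop atTop := by
    rw [← prod_atTop_atTop_eq]; exact tendsto_fst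
  have hsnd : Tendsto (Prod.snd : ℕ × ℕ → ℕ) atTop atTop := by
    rw [← prod_atTop_atTop_eq]; exact tendsto_snd
  have hN : Tendsto (fun MN : ℕ × ℕ => (MN.2 + 1 : ℝ)) atTop (cocompact ℝ) :=
    (tendsto_atTop_add_const_right _ 1 (tendsto_natCast_atTop_atTop.comp hsnd)).mono_right
      atTop_le_cocompact
  have hM : Tendsto (fun MN : ℕ × ℕ => (-MN.1 : ℝ)) atTop (cocompact ℝ) :=
    (tendsto_neg_atTop_atBot.comp (tendsto_natCast_atTop_atTop.comp hfst)).mono_right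
      atBot_le_cocompact
  simp_rw [← fourierCoef_sub hf' hg',
    sum_Icc_fourierCoef_mul_exp_eq (hfper.sub hgper) (hf'.sub hg') hφ]
  simpa using ((hR.comp hN).sub (hR.comp hM)).const_smul (1 / (2 * π))

/-- Principle of localization: if `f, g ∈ L¹(T)` agree a.e. on an open interval `(c, d)`,
then at each point `t` of that interval their Fourier series are equi-convergent:
`∑_{n=-M}^{N} (a_n(f) - a_n(g)) e^{int} → 0` as `M → ∞` and `N → ∞` independently. -/
theorem localization_principle (f g : ℝ → ℂ)
    (hfper : Function.Periodic f (2 * π)) (hgper : Function.Periodic g (2 * π))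
    (hf : IntegrableOn f (Ioc (-π) π)) (hg : IntegrableOn g (Ioc (-π) π))
    (c d : ℝ) (hcd : c < d)
    (heq : ∀ᵐ x ∂(volume.restrict (Ioo c d)), f x = g x)
    (t : ℝ) (ht : t ∈ Ioo c d) :
    Tendsto (fun MN : ℕ × ℕ =>
        ∑ n ∈ Finset.Icc (-(MN.1 : ℤ)) (MN.2 : ℤ),
          (fourierCoef f n - fourierCoef g n) * Complex.exp (Complex.I * (n : ℂ) * (t : ℂ)))
      atTop (nhds 0) :=
  localization_principle_general f g hfper hgper hf hg c d heq t ht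
end

section
/- If f ∈ L¹(T) and the function x ↦ (f(x) + f(−x))/x is integrable on (−π, π), then the symmetric partial sums Σ_{n=−N}^{N} a_n(f) tend to 0 as N → ∞. -/
/-!
The partial sum `∑_{|n| ≤ N} a_n(f)` is `(1/2π) ∫ f D_N` with the Dirichlet kernel `D_N`. Since
`D_N` is even, `f` may be replaced by `(f(x) + f(-x))/2`, and `D_N(x) sin(x/2) = sin((N + 1/2)x)`
turns the integral into `(1/4π) ∫ g(x) sin((N + 1/2)x)` with `g(x) = (f(x) + f(-x))/sin(x/2)`.
Jordan's inequality `|x| ≤ π |sin(x/2)|` on `[-π, π]` bounds `x / sin(x/2)`, so `g` is integrable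
along with `(f(x) + f(-x))/x`, and the Riemann–Lebesgue lemma finishes the proof.
-/

open MeasureTheory Filter Real Set

open scoped Topology

noncomputable def dirichletKernel (N : ℕ) (x : ℝ) : ℂ :=
  ∑ n ∈ Finset.Icc (-(N : ℤ)) N, Complex.exp (-Complex.I * n * x)

theorem Finset.sum_Icc_neg_add_one {M : Type*} [AddCommMonoid M] (g : ℤ → M) (N : ℕ) :
    ∑ n ∈ Finset.Icc (-(N + 1 : ℤ)) (N + 1), g n =
      ∑ n ∈ Finset.Icc (-(N : ℤ)) N, g n + (g (-(N + 1)) + g (N + 1)) := by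
  rw [neg_add', ← Finset.insert_Icc_left_eq_Icc_sub_one (by omega),
    ← Finset.insert_Icc_right_eq_Icc_add_one (by omega),
    Finset.sum_insert (by simp only [Finset.mem_insert, Finset.mem_Icc]; omega),
    Finset.sum_insert (by simp)]
  abel

theorem dirichletKernel_zero (x : ℝ) : dirichletKernel 0 x = 1 := by
  simp [dirichletKernel]

theorem dirichletKernel_succ (N : ℕ) (x : ℝ) :
    dirichletKernel (N + 1) x = dirichletKernel N x + 2 * Real.cos ((N + 1) * x) := by
  rw [dirichletKernel, Nat.cast_succ, Finset.sum_Icc_neg_add_one, Complex.ofReal_cos,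
    Complex.two_cos]
  congr 1
  congr 2 <;> push_cast <;> ring

theorem dirichletKernel_neg (N : ℕ) (x : ℝ) : dirichletKernel N (-x) = dirichletKernel N x := by
  induction N with
  | zero => simp [dirichletKernel_zero]
  | succ N ih => rw [dirichletKernel_succ, dirichletKernel_succ, ih, mul_neg, Real.cos_neg]

theorem continuous_dirichletKernel (N : ℕ) : Continuous (dirichletKernel N) := by
  unfold dirichletKernel
  fun_prop

theorem dirichletKernel_mul_sin_half (N : ℕ) (x : ℝ) :
    dirichletKernel N x * Real.sin (x / 2) = Real.sin ((N + 1 / 2) * x) := by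
  induction N with
  | zero => simp [dirichletKernel_zero, div_eq_inv_mul]
  | succ N ih =>
    have h : Real.sin ((N + 1 + 1 / 2) * x) =
        Real.sin ((N + 1 / 2) * x) + 2 * Real.cos ((N + 1) * x) * Real.sin (x / 2) := by
      rw [← sub_eq_iff_eq_add', Real.sin_sub_sin]
      ring_nf
    rw [dirichletKernel_succ, add_mul, ih, Nat.cast_succ, h]
    push_cast
    ring

theorem sum_fourierCoef_eq_integral_mul_dirichletKernel {f : ℝ → ℂ}
    (hf : IntervalIntegrable f volume (-π) π) (N : ℕ) :
    ∑ n ∈ Finset.Icc (-(N : ℤ)) N, fourierCoef f n =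
      (1 / (2 * π)) • ∫ x in (-π)..π, f x * dirichletKernel N x := by
  simp only [fourierCoef, dirichletKernel, Finset.mul_sum, ← Finset.smul_sum]
  rw [intervalIntegral.integral_finsetSum fun n _ =>
    hf.mul_continuousOn (by fun_prop : Continuous _).continuousOn]

theorem intervalIntegral.integral_add_comp_neg_mul_of_even {f g : ℝ → ℂ} {a : ℝ}
    (hf : IntervalIntegrable f volume (-a) a) (hg : g.Even) (hg_cont : Continuous g) :
    ∫ x in (-a)..a, (f x + f (-x)) * g x = 2 * ∫ x in (-a)..a, f x * g x := by
  have hf_neg : IntervalIntegrable (fun x => f (-x)) volume (-a) a := by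
    simpa using (IntervalIntegrable.iff_comp_neg (by simp)).mp hf.symm
  have hsymm : ∫ x in (-a)..a, f (-x) * g x = ∫ x in (-a)..a, f x * g x := by
    simpa [hg _] using intervalIntegral.integral_comp_neg (a := -a) (b := a) fun x => f x * g x
  simp only [add_mul]
  rw [intervalIntegral.integral_add (hf.mul_continuousOn hg_cont.continuousOn)
    (hf_neg.mul_continuousOn hg_cont.continuousOn), hsymm, two_mul]

open Complex in
theorem tendsto_integral_mul_cexp_cocompact (g : ℝ → ℂ) :
    Tendsto (fun t : ℝ => ∫ x, g x * cexp (t * x * I)) (cocompact ℝ) (𝓝 0) := by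
  -- `𝐞 y = exp (2π y I)`, so the frequency `t` corresponds to `w = -t / (2π)`.
  have hscale : Tendsto (fun t : ℝ => -(2 * π)⁻¹ * t) (cocompact ℝ) (cocompact ℝ) :=
    (Homeomorph.mulLeft₀ _ (by simp [pi_ne_zero])).toCocompactMap.cocompact_tendsto'
  refine ((Real.tendsto_integral_exp_smul_cocompact g).comp hscale).congr fun t => ?_
  refine integral_congr_ae (ae_of_all _ fun x => ?_)
  simp only [Circle.smul_def, Real.fourierChar_apply, smul_eq_mul]
  rw [mul_comm]
  congr 2
  push_cast
  field_simp [pi_ne_zero]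

theorem tendsto_integral_mul_sin_cocompact {g : ℝ → ℂ} (hg : Integrable g) :
    Tendsto (fun t : ℝ => ∫ x, g x * Real.sin (t * x)) (cocompact ℝ) (𝓝 0) := by
  have hexp (t : ℝ) : Integrable fun x : ℝ => g x * Complex.exp (t * x * Complex.I) :=
    hg.mul_bdd (by fun_prop) (ae_of_all _ fun x => by
      rw [← Complex.ofReal_mul, Complex.norm_exp_ofReal_mul_I])
  have hsin (t : ℝ) : ∫ x, g x * Real.sin (t * x) =
      ((∫ x, g x * Complex.exp ((-t : ℝ) * x * Complex.I)) -
        ∫ x, g x * Complex.exp (t * x * Complex.I)) * (Complex.I / 2) := by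
    rw [← integral_sub (hexp _) (hexp _), ← integral_mul_const]
    refine integral_congr_ae (ae_of_all _ fun x => ?_)
    have htwo_sin := Complex.two_sin (t * x)
    push_cast at htwo_sin ⊢
    simp only [neg_mul] at htwo_sin ⊢
    linear_combination (g x / 2) * htwo_sin
  have hneg : Tendsto (fun t : ℝ => -t) (cocompact ℝ) (cocompact ℝ) :=
    (Homeomorph.neg ℝ).toCocompactMap.cocompact_tendsto'
  have h := (((tendsto_integral_mul_cexp_cocompact g).comp hneg).sub
    (tendsto_integral_mul_cexp_cocompact g)).mul_const (Complex.I / 2)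
  rw [sub_zero, zero_mul] at h
  exact h.congr fun t => (hsin t).symm

theorem tendsto_setIntegral_mul_sin_cocompact {g : ℝ → ℂ} {s : Set ℝ} (hs : MeasurableSet s)
    (hg : IntegrableOn g s) :
    Tendsto (fun t : ℝ => ∫ x in s, g x * Real.sin (t * x)) (cocompact ℝ) (𝓝 0) := by
  simpa [← integral_indicator hs, indicator_mul_left] using
    tendsto_integral_mul_sin_cocompact (hg.integrable_indicator hs)

theorem abs_le_pi_mul_abs_sin_half {x : ℝ} (hx : |x| ≤ π) : |x| ≤ π * |sin (x / 2)| := by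
  have hsin : |sin (x / 2)| = |sin (|x| / 2)| := by
    rcases abs_choice x with h | h <;> rw [h]
    rw [neg_div, sin_neg, abs_neg]
  have hjordan := mul_le_sin (x := |x| / 2) (by positivity) (by linarith)
  rw [hsin]
  calc |x| = π * (2 / π * (|x| / 2)) := by field_simp
    _ ≤ π * |sin (|x| / 2)| := by gcongr; exact hjordan.trans (le_abs_self _)

theorem sin_half_ne_zero {x : ℝ} (hx : |x| ≤ π) (hx0 : x ≠ 0) : sin (x / 2) ≠ 0 := by
  intro h
  have hbound := abs_le_pi_mul_abs_sin_half hx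
  rw [h, abs_zero, mul_zero] at hbound
  exact hx0 (abs_nonpos_iff.mp hbound)

theorem integrableOn_div_sin_half {g : ℝ → ℂ}
    (hg : IntegrableOn (fun x => g x / x) (Ioo (-π) π)) :
    IntegrableOn (fun x => g x / Real.sin (x / 2)) (Ioo (-π) π) := by
  have hbound : ∀ x ∈ Ioo (-π) π, ‖(x : ℂ) / Real.sin (x / 2)‖ ≤ π := fun x hx => by
    rw [norm_div, Complex.norm_real, Complex.norm_real, Real.norm_eq_abs, Real.norm_eq_abs]
    exact div_le_of_le_mul₀ (abs_nonneg _) pi_pos.le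
      (abs_le_pi_mul_abs_sin_half (abs_le.mpr ⟨hx.1.le, hx.2.le⟩))
  refine (hg.bdd_mul (c := π)
    (by fun_prop : Measurable fun x : ℝ => (x : ℂ) / Real.sin (x / 2)).aestronglyMeasurable
    ((ae_restrict_iff' measurableSet_Ioo).2 (ae_of_all _ hbound))).congr ?_
  filter_upwards [ae_restrict_of_ae (volume.ae_ne 0)] with x hx0
  field_simp [Complex.ofReal_ne_zero.mpr hx0]

theorem sum_fourierCoef_eq_setIntegral_mul_sin {f : ℝ → ℂ}
    (hf : IntervalIntegrable f volume (-π) π) (N : ℕ) :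
    ∑ n ∈ Finset.Icc (-(N : ℤ)) N, fourierCoef f n =
      (1 / (4 * π)) • ∫ x in Ioo (-π) π,
        (f x + f (-x)) / Real.sin (x / 2) * Real.sin ((N + 1 / 2 : ℝ) * x) := by
  have hkernel : ∀ᵐ x, x ∈ Ioo (-π) π →
      (f x + f (-x)) * dirichletKernel N x =
        (f x + f (-x)) / Real.sin (x / 2) * Real.sin ((N + 1 / 2 : ℝ) * x) := by
    filter_upwards [volume.ae_ne 0] with x hx0 hx
    have hsin : (Real.sin (x / 2) : ℂ) ≠ 0 :=
      Complex.ofReal_ne_zero.mpr (sin_half_ne_zero (abs_le.mpr ⟨hx.1.le, hx.2.le⟩) hx0)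
    rw [← dirichletKernel_mul_sin_half, mul_comm (dirichletKernel N x), ← mul_assoc,
      div_mul_cancel₀ _ hsin]
  calc _ = (1 / (2 * π)) • ∫ x in (-π)..π, f x * dirichletKernel N x :=
        sum_fourierCoef_eq_integral_mul_dirichletKernel hf N
    _ = (1 / (4 * π)) • ∫ x in (-π)..π, (f x + f (-x)) * dirichletKernel N x := by
        rw [intervalIntegral.integral_add_comp_neg_mul_of_even hf (dirichletKernel_neg N)
          (continuous_dirichletKernel N), Complex.real_smul, Complex.real_smul]
        push_cast
        ring
    _ = _ := by
        rw [intervalIntegral.integral_of_le (by linarith [pi_pos]), integral_Ioc_eq_integral_Ioo,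
          setIntegral_congr_ae measurableSet_Ioo hkernel]

theorem symmetric_sum_fourierCoef_tendsto_zero_general (f : ℝ → ℂ)
    (hf : IntegrableOn f (Ioc (-π) π))
    (hdiv : IntegrableOn (fun x => (f x + f (-x)) / (x : ℂ)) (Ioo (-π) π)) :
    Tendsto (fun N : ℕ => ∑ n ∈ Finset.Icc (-(N : ℤ)) (N : ℤ), fourierCoef f n)
      atTop (nhds 0) := by
  have hfI : IntervalIntegrable f volume (-π) π :=
    (intervalIntegrable_iff_integrableOn_Ioc_of_le (by linarith [pi_pos])).2 hf
  have hfreq : Tendsto (fun N : ℕ => (N + 1 / 2 : ℝ)) atTop (cocompact ℝ) :=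
    (tendsto_atTop_add_const_right _ _ tendsto_natCast_atTop_atTop).mono_right atTop_le_cocompact
  have hRL := ((tendsto_setIntegral_mul_sin_cocompact measurableSet_Ioo
    (integrableOn_div_sin_half hdiv)).comp hfreq).const_smul (1 / (4 * π))
  rw [smul_zero] at hRL
  exact hRL.congr fun N => (sum_fourierCoef_eq_setIntegral_mul_sin hfI N).symm

/-- If `f ∈ L¹(T)` and `x ↦ (f(x) + f(-x))/x` is integrable on `(-π, π)`, then the
symmetric partial sums `∑_{n=-N}^{N} a_n(f)` tend to `0` as `N → ∞`. -/
theorem symmetric_sum_fourierCoef_tendsto_zero (f : ℝ → ℂ)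
    (hper : Function.Periodic f (2 * π)) (hf : IntegrableOn f (Ioc (-π) π))
    (hdiv : IntegrableOn (fun x => (f x + f (-x)) / (x : ℂ)) (Ioo (-π) π)) :
    Tendsto (fun N : ℕ => ∑ n ∈ Finset.Icc (-(N : ℤ)) (N : ℤ), fourierCoef f n)
      atTop (nhds 0) :=
  symmetric_sum_fourierCoef_tendsto_zero_general f hf hdiv
end

section
/- Wiener's theorem: let μ ∈ M(T) be a finite complex Borel measure whose atoms (point masses) are a_k = μ({x_k}), k ranging over the (at most countably many) atoms of μ. Then (1/(2N+1)) Σ_{n=−N}^{N} |μ̂(n)|² → Σ_k |a_k|² as N → ∞. Consequently, μ has no atoms if and only if (1/(2N+1)) Σ_{n=−N}^{N} |μ̂(n)|² → 0. -/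
/-! Expanding `|μ̂(n)|²` as a double integral, the Cesàro mean over `|n| ≤ N` becomes the integral
of `D_N(y - x)` against `μ ⊗ μ̄`, where `D_N = (2N+1)⁻¹ ∑_{|n| ≤ N} e^{int}`. This kernel is bounded
by `1`, and it tends to the indicator of `0`, because for `t ≠ 0` the geometric sum is bounded by
`2 / |e^{it} - 1|`. By dominated convergence the means therefore tend to `(μ ⊗ μ̄)(diagonal)`,
and by Fubini this is `∑ₓ |μ({x})|²`. -/

open MeasureTheory Filter Real AddCircle

instance : Fact (0 < 2 * π) := ⟨Real.two_pi_pos⟩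

open scoped ComplexConjugate Topology
open Finset

lemma norm_geom_sum_le_of_norm_eq_one {𝕜 : Type*} [NormedDivisionRing 𝕜] {z : 𝕜}
    (hz : ‖z‖ = 1) (hz1 : z ≠ 1) (m : ℕ) :
    ‖∑ k ∈ range m, z ^ k‖ ≤ 2 / ‖z - 1‖ := by
  rw [geom_sum_eq hz1, norm_div]
  gcongr
  calc ‖z ^ m - 1‖ ≤ ‖z ^ m‖ + ‖(1 : 𝕜)‖ := norm_sub_le _ _
    _ = 2 := by rw [norm_pow, hz, one_pow, norm_one]; norm_num

lemma sum_Icc_neg_zpow_eq {K : Type*} [DivisionRing K] {z : K} (hz : z ≠ 0) (N : ℕ) :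
    ∑ n ∈ Icc (-(N : ℤ)) N, z ^ n = z ^ (-(N : ℤ)) * ∑ k ∈ range (2 * N + 1), z ^ k := by
  rw [mul_sum]
  refine sum_nbij' (fun n => (n + N).toNat) (fun k => k - N) ?_ ?_ ?_ ?_ fun n hn => ?_
  any_goals intro n hn; simp only [mem_Icc, mem_range] at hn ⊢; omega
  rw [← zpow_natCast, ← zpow_add₀ hz]
  congr 1
  simp only [mem_Icc] at hn
  omega

lemma tendsto_inv_mul_sum_Icc_zpow_of_norm_eq_one {𝕜 : Type*} [RCLike 𝕜] {z : 𝕜}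
    (hz : ‖z‖ = 1) (hz1 : z ≠ 1) :
    Tendsto (fun N : ℕ => (2 * N + 1 : 𝕜)⁻¹ * ∑ n ∈ Icc (-(N : ℤ)) N, z ^ n) atTop (𝓝 0) := by
  have hz0 : z ≠ 0 := norm_ne_zero_iff.mp (hz ▸ one_ne_zero)
  have hbound (N : ℕ) : ‖(2 * N + 1 : 𝕜)⁻¹ * ∑ n ∈ Icc (-(N : ℤ)) N, z ^ n‖ ≤
      2 / ‖z - 1‖ * (2 * N + 1 : ℝ)⁻¹ := by
    rw [sum_Icc_neg_zpow_eq hz0, norm_mul, norm_mul, norm_zpow, hz, one_zpow, one_mul, mul_comm,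
      norm_inv]
    gcongr
    · exact norm_geom_sum_le_of_norm_eq_one hz hz1 _
    · exact_mod_cast (RCLike.norm_natCast (K := 𝕜) (2 * N + 1)).ge
  refine squeeze_zero_norm hbound ?_
  have hinv : Tendsto (fun N : ℕ => (2 * N + 1 : ℝ)⁻¹) atTop (𝓝 0) :=
    tendsto_inv_atTop_zero.comp <| tendsto_atTop_add_const_right _ 1 <|
      tendsto_natCast_atTop_atTop.const_mul_atTop two_pos
  simpa using hinv.const_mul (2 / ‖z - 1‖)

section DirichletKernel

variable {T : ℝ}

lemma fourier_apply_eq_toCircle_zpow (n : ℤ) (t : AddCircle T) :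
    fourier n t = (toCircle t : ℂ) ^ n := by
  rw [fourier_apply, toCircle_zsmul, Circle.coe_zpow]

lemma norm_fourier_apply (n : ℤ) (t : AddCircle T) : ‖fourier n t‖ = 1 :=
  Circle.norm_coe _

lemma fourier_sub_apply (n : ℤ) (s t : AddCircle T) :
    fourier n (s - t) = fourier n s * conj (fourier n t) := by
  rw [fourier_apply_eq_toCircle_zpow, fourier_apply_eq_toCircle_zpow,
    fourier_apply_eq_toCircle_zpow, sub_eq_add_neg, toCircle_add, toCircle_neg, Circle.coe_mul,
    mul_zpow, Circle.coe_inv_eq_conj, ← map_zpow₀]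

noncomputable def normalizedDirichletKernel (N : ℕ) (t : AddCircle T) : ℂ :=
  (2 * N + 1 : ℂ)⁻¹ * ∑ n ∈ Icc (-(N : ℤ)) N, fourier n t

lemma continuous_normalizedDirichletKernel (N : ℕ) :
    Continuous (normalizedDirichletKernel (T := T) N) :=
  continuous_const.mul <| continuous_finsetSum _ fun n _ => (fourier n).continuous

lemma natCast_card_Icc_neg (N : ℕ) : (#(Icc (-(N : ℤ)) N) : ℝ) = 2 * N + 1 := by
  rw [Int.card_Icc, show ((N : ℤ) + 1 - -N).toNat = 2 * N + 1 by omega]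
  push_cast
  ring

lemma norm_normalizedDirichletKernel_le_one (N : ℕ) (t : AddCircle T) :
    ‖normalizedDirichletKernel N t‖ ≤ 1 := by
  have hsum : ‖∑ n ∈ Icc (-(N : ℤ)) N, fourier n t‖ ≤ 2 * N + 1 := by
    refine (norm_sum_le _ _).trans_eq ?_
    simp only [norm_fourier_apply, sum_const, nsmul_eq_mul, mul_one,
      natCast_card_Icc_neg]
  have hnorm : ‖(2 * N + 1 : ℂ)‖ = 2 * N + 1 := by
    exact_mod_cast Complex.norm_natCast (2 * N + 1)
  rw [normalizedDirichletKernel, norm_mul, norm_inv, hnorm]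
  exact inv_mul_le_one_of_le₀ hsum (by positivity)

lemma normalizedDirichletKernel_zero (N : ℕ) :
    normalizedDirichletKernel N (0 : AddCircle T) = 1 := by
  have hcard : (#(Icc (-(N : ℤ)) N) : ℂ) = 2 * N + 1 := by
    exact_mod_cast natCast_card_Icc_neg N
  rw [normalizedDirichletKernel]
  simp only [fourier_eval_zero, sum_const, nsmul_eq_mul, mul_one, hcard]
  exact inv_mul_cancel₀ (by exact_mod_cast (by positivity : (2 * N + 1 : ℝ) ≠ 0))

lemma tendsto_normalizedDirichletKernel [Fact (0 < T)] (t : AddCircle T) :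
    Tendsto (normalizedDirichletKernel · t) atTop (𝓝 (if t = 0 then 1 else 0)) := by
  split_ifs with ht
  · simp only [ht, normalizedDirichletKernel_zero, tendsto_const_nhds]
  · have hz1 : (toCircle t : ℂ) ≠ 1 := by
      rw [← Circle.coe_one, Ne, Circle.coe_inj, ← toCircle_zero]
      exact (injective_toCircle (Fact.out : 0 < T).ne').ne ht
    simpa only [normalizedDirichletKernel, fourier_apply_eq_toCircle_zpow] using
      tendsto_inv_mul_sum_Icc_zpow_of_norm_eq_one (Circle.norm_coe _) hz1

end DirichletKernel

section Atoms

variable {α E : Type*} [MeasurableSpace α] [NormedAddCommGroup E] [NormedSpace ℝ E]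
  [CompleteSpace E] {ν : Measure α} [SFinite ν]

lemma countable_setOf_measure_singleton_ne_zero [MeasurableSingletonClass α] :
    {x | ν {x} ≠ 0}.Countable := by
  simpa only [pos_iff_ne_zero] using Measure.countable_meas_pos_of_disjoint_iUnion (μ := ν)
    (fun x => measurableSet_singleton x) fun x y hxy => Set.disjoint_singleton.mpr hxy

lemma hasSum_measureReal_singleton_smul [MeasurableSingletonClass α] {g : α → E}
    (hg : Integrable g ν) :
    HasSum (fun x => ν.real {x} • g x) (∫ x in {x | ν {x} ≠ 0}, g x ∂ν) := by
  set S := {x | ν {x} ≠ 0}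
  have hS : (⋃ x : S, {(x : α)}) = S := Set.iUnion_of_singleton_coe S
  have hsub : HasSum (fun x : S => ν.real {(x : α)} • g x) (∫ x in S, g x ∂ν) := by
    have : Countable S := countable_setOf_measure_singleton_ne_zero.to_subtype
    have h := hasSum_integral_iUnion (μ := ν)
      (fun x : S => measurableSet_singleton (x : α))
      (fun x y hxy => Set.disjoint_singleton.mpr (Subtype.coe_ne_coe.mpr hxy))
      (by rw [hS]; exact hg.integrableOn)
    rw [hS] at h
    simpa only [integral_singleton] using h
  refine (hasSum_subtype_iff_of_support_subset fun x hx => ?_).mp hsub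
  by_contra hxS
  exact hx (by simp only [measureReal_def, not_not.mp hxS, ENNReal.toReal_zero, zero_smul])

omit [SFinite ν] in
lemma integral_indicator_diagonal_prodMk [MeasurableSingletonClass α] (F : α × α → E) (x : α) :
    ∫ y, (Set.diagonal α).indicator F (x, y) ∂ν = ν.real {x} • F (x, x) := by
  have : (fun y => (Set.diagonal α).indicator F (x, y)) = ({x} : Set α).indicator (F ⟨x, ·⟩) := by
    funext y
    by_cases hxy : x = y
    · simp [hxy]
    · simp [hxy, Ne.symm hxy]
  rw [this, integral_indicator (measurableSet_singleton x), integral_singleton]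

lemma integral_indicator_diagonal [MeasurableEq α] {F : α × α → E}
    (hF : Integrable F (ν.prod ν)) :
    ∫ p, (Set.diagonal α).indicator F p ∂(ν.prod ν) = ∫ x, ν.real {x} • F (x, x) ∂ν := by
  simp only [integral_prod _ (hF.indicator measurableSet_diagonal),
    integral_indicator_diagonal_prodMk]

lemma hasSum_integral_indicator_diagonal [MeasurableEq α] {F : α × α → E}
    (hF : Integrable F (ν.prod ν)) :
    HasSum (fun x => ν.real {x} ^ 2 • F (x, x))
      (∫ p, (Set.diagonal α).indicator F p ∂(ν.prod ν)) := by
  have hg : Integrable (fun x => ν.real {x} • F (x, x)) ν := by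
    simpa only [integral_indicator_diagonal_prodMk] using
      (hF.indicator measurableSet_diagonal).integral_prod_left
  rw [integral_indicator_diagonal hF, ← setIntegral_eq_integral_of_forall_compl_eq_zero
    (s := {x | ν {x} ≠ 0}) fun x hx => by
      rw [measureReal_def, not_not.mp hx, ENNReal.toReal_zero, zero_smul]]
  simpa only [smul_smul, sq] using hasSum_measureReal_singleton_smul hg

end Atoms

section FourierStieltjes

lemma integrable_mul_conj_prod {α 𝕜 : Type*} [MeasurableSpace α] [RCLike 𝕜] {ν : Measure α}
    [SFinite ν] {w : α → 𝕜} (hw : Integrable w ν) :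
    Integrable (fun p : α × α => w p.1 * conj (w p.2)) (ν.prod ν) :=
  hw.mul_prod (memLp_one_iff_integrable.mp (memLp_one_iff_integrable.mpr hw).star)

variable {T : ℝ} {ν : Measure (AddCircle T)} [SFinite ν] {w : AddCircle T → ℂ}

lemma norm_integral_fourier_mul_sq_eq_integral_prod (n : ℤ) :
    (‖∫ x, fourier (-n) x * w x ∂ν‖ : ℂ) ^ 2 =
      ∫ p, fourier n (p.2 - p.1) * (w p.1 * conj (w p.2)) ∂(ν.prod ν) := by
  have hconj : conj (∫ x, fourier (-n) x * w x ∂ν) = ∫ y, fourier n y * conj (w y) ∂ν := by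
    simp only [← integral_conj, map_mul, fourier_neg, Complex.conj_conj]
  rw [← Complex.mul_conj', hconj, ← integral_prod_mul]
  congr 1 with p
  rw [fourier_sub_apply, ← fourier_neg]
  ring

lemma ofReal_average_norm_sq_integral_fourier_mul (hw : Integrable w ν) (N : ℕ) :
    (((1 / (2 * (N : ℝ) + 1)) *
        ∑ n ∈ Icc (-(N : ℤ)) N, ‖∫ x, fourier (-n) x * w x ∂ν‖ ^ 2 : ℝ) : ℂ) =
      ∫ p, normalizedDirichletKernel N (p.2 - p.1) * (w p.1 * conj (w p.2)) ∂(ν.prod ν) := by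
  have hterm (n : ℤ) : Integrable (fun p : AddCircle T × AddCircle T =>
      fourier n (p.2 - p.1) * (w p.1 * conj (w p.2))) (ν.prod ν) :=
    (integrable_mul_conj_prod hw).bdd_mul (c := 1)
      ((fourier n).continuous.comp (continuous_snd.sub continuous_fst)).aestronglyMeasurable
      (Eventually.of_forall fun p => (norm_fourier_apply n _).le)
  push_cast
  simp only [normalizedDirichletKernel, mul_assoc, sum_mul, integral_const_mul, one_div,
    integral_finsetSum _ fun n _ => hterm n, norm_integral_fourier_mul_sq_eq_integral_prod]

lemma tendsto_integral_normalizedDirichletKernel_mul [Fact (0 < T)]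
    {μ : Measure (AddCircle T × AddCircle T)} {F : AddCircle T × AddCircle T → ℂ}
    (hF : Integrable F μ) :
    Tendsto (fun N => ∫ p, normalizedDirichletKernel N (p.2 - p.1) * F p ∂μ) atTop
      (𝓝 (∫ p, (Set.diagonal _).indicator F p ∂μ)) := by
  refine tendsto_integral_of_dominated_convergence (‖F ·‖) (fun N => ?_) hF.norm (fun N => ?_) ?_
  · exact (((continuous_normalizedDirichletKernel N).comp (continuous_snd.sub continuous_fst)
      ).aestronglyMeasurable).mul hF.1
  · refine Eventually.of_forall fun p => ?_
    rw [norm_mul]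
    exact mul_le_of_le_one_left (norm_nonneg _) (norm_normalizedDirichletKernel_le_one N _)
  · refine Eventually.of_forall fun p => ?_
    convert (tendsto_normalizedDirichletKernel (p.2 - p.1)).mul_const (F p) using 2
    by_cases hp : p.1 = p.2
    · simp [hp]
    · simp [hp, sub_eq_zero, Ne.symm hp]

lemma exists_hasSum_and_tendsto_average_norm_integral_fourier_mul_sq [Fact (0 < T)]
    (hw : Integrable w ν) :
    ∃ ℓ, HasSum (fun x => ‖∫ t in {x}, w t ∂ν‖ ^ 2) ℓ ∧
      Tendsto (fun N : ℕ => (1 / (2 * (N : ℝ) + 1)) *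
        ∑ n ∈ Icc (-(N : ℤ)) N, ‖∫ x, fourier (-n) x * w x ∂ν‖ ^ 2) atTop (𝓝 ℓ) := by
  set L := ∫ p, (Set.diagonal _).indicator (fun p => w p.1 * conj (w p.2)) p ∂(ν.prod ν)
  have hsum : HasSum (fun x => ((‖∫ t in {x}, w t ∂ν‖ ^ 2 : ℝ) : ℂ)) L := by
    have hatom (x : AddCircle T) : ((‖∫ t in {x}, w t ∂ν‖ ^ 2 : ℝ) : ℂ) =
        ν.real {x} ^ 2 • (w x * conj (w x)) := by
      rw [integral_singleton, Complex.ofReal_pow, ← Complex.mul_conj']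
      simp only [Complex.real_smul, map_mul, Complex.conj_ofReal, Complex.ofReal_pow]
      ring
    simpa only [hatom] using hasSum_integral_indicator_diagonal (integrable_mul_conj_prod hw)
  have htend : Tendsto (fun N : ℕ => (((1 / (2 * (N : ℝ) + 1)) *
      ∑ n ∈ Icc (-(N : ℤ)) N, ‖∫ x, fourier (-n) x * w x ∂ν‖ ^ 2 : ℝ) : ℂ)) atTop (𝓝 L) := by
    simpa only [ofReal_average_norm_sq_integral_fourier_mul hw] using
      tendsto_integral_normalizedDirichletKernel_mul (integrable_mul_conj_prod hw)
  refine ⟨L.re, ?_, ?_⟩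
  · simpa only [Complex.ofReal_re] using Complex.hasSum_re hsum
  · simpa only [Function.comp_def, Complex.ofReal_re] using
      (Complex.continuous_re.tendsto L).comp htend

end FourierStieltjes

/-- Wiener's theorem on `T`. A finite complex Borel measure `μ` on `T` is represented as
`dμ = w dν` with `ν` a finite positive Borel measure and `w` a `ν`-integrable complex
density (every finite complex measure has this form, e.g. with `ν = |μ|`). Its
Fourier–Stieltjes coefficients are `μ̂(n) = ∫ e^{-inx} dμ(x) = ∫ e^{-inx} w(x) dν(x)`,
and its point mass at `x` is `μ({x}) = ∫_{{x}} w dν`. Then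
`(1/(2N+1)) ∑_{n=-N}^{N} |μ̂(n)|² → ∑_x |μ({x})|²` (the sum over the atoms of `μ`);
consequently `μ` has no atoms iff `(1/(2N+1)) ∑_{n=-N}^{N} |μ̂(n)|² → 0`. -/
theorem wiener_theorem (ν : Measure (AddCircle (2 * π))) [IsFiniteMeasure ν]
    (w : AddCircle (2 * π) → ℂ) (hw : Integrable w ν) :
    Tendsto
      (fun N : ℕ => (1 / (2 * (N : ℝ) + 1)) *
        ∑ n ∈ Finset.Icc (-(N : ℤ)) (N : ℤ), ‖∫ x, (fourier (-n)) x * w x ∂ν‖ ^ 2)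
      atTop
      (nhds (∑' x : AddCircle (2 * π), ‖∫ t in ({x} : Set (AddCircle (2 * π))), w t ∂ν‖ ^ 2)) ∧
    ((∀ x : AddCircle (2 * π), ∫ t in ({x} : Set (AddCircle (2 * π))), w t ∂ν = 0) ↔
      Tendsto
        (fun N : ℕ => (1 / (2 * (N : ℝ) + 1)) *
          ∑ n ∈ Finset.Icc (-(N : ℤ)) (N : ℤ), ‖∫ x, (fourier (-n)) x * w x ∂ν‖ ^ 2)
        atTop (nhds 0)) := by
  obtain ⟨ℓ, hsum, htend⟩ := exists_hasSum_and_tendsto_average_norm_integral_fourier_mul_sq hw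
  rw [hsum.tsum_eq]
  refine ⟨htend, ?_⟩
  calc (∀ x, ∫ t in {x}, w t ∂ν = 0)
      ↔ HasSum (fun x => ‖∫ t in {x}, w t ∂ν‖ ^ 2) 0 := by
        simp [hasSum_zero_iff_of_nonneg fun x => sq_nonneg _, funext_iff]
    _ ↔ ℓ = 0 := ⟨hsum.unique, fun h => h ▸ hsum⟩
    _ ↔ _ := ⟨fun h => h ▸ htend, tendsto_nhds_unique htend⟩
end

section
/- Pointwise Fejér summability: let f ∈ L¹(T), let x be a point of T and L a complex number such that (1/t) ∫_0^t |f(x+u) + f(x−u) − 2L| du → 0 as t → 0⁺. Then (K_n * f)(x) → L as n → ∞. -/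
/-!
For `n ≥ 1`, `n K_n(t) = |∑_{k<n} e^{ikt}|²`. Hence `0 ≤ K_n ≤ n`, and since
`|e^{it} - 1| = 2 sin (t/2) ≥ 2t/π`, also `K_n(t) ≤ π²/(n t²)` on `(0, π]`. As `K_n` is even with
`∫_{-π}^{π} K_n = 2π`, `|(K_n * f)(x) - L|` is at most `(1/2π) ∫_0^π K_n g` for
`g(t) = |f(x+t) + f(x-t) - 2L|`, and the hypothesis says `∫_0^s g ≤ ε s` for `s ≤ δ`.
Split `[0, π]` at `1/n` and at a point `2^J/n ∈ (δ/2, δ]`: on `[0, 1/n]` use `K_n ≤ n`; on each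
dyadic shell `[2^j/n, 2^{j+1}/n]` the decay bound gives at most `2π² ε 2^{-j}`, a geometric series;
beyond `2^J/n` the decay bound alone gives `O(1/n)`.
-/

open MeasureTheory Filter Real Set

/-- The Fejér kernel `K_n(x) = ∑_{k=-n}^{n} (1 - |k|/n) e^{ikx}`. -/
noncomputable def fejerKernel (n : ℕ) (x : ℝ) : ℂ :=
  ∑ k ∈ Finset.Icc (-(n : ℤ)) (n : ℤ),
    ((1 - |(k : ℝ)| / (n : ℝ) : ℝ) : ℂ) * Complex.exp (Complex.I * (k : ℂ) * (x : ℂ))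

open Complex

lemma Finset.sum_Icc_neg_natCast_succ {M : Type*} [AddCommMonoid M] (f : ℤ → M) (n : ℕ) :
    ∑ k ∈ Icc (-((n + 1 : ℕ) : ℤ)) (n + 1 : ℕ), f k
      = ∑ k ∈ Icc (-(n : ℤ)) n, f k + f (n + 1 : ℕ) + f (-(n + 1 : ℕ)) := by
  have hIcc : Icc (-((n + 1 : ℕ) : ℤ)) (n + 1 : ℕ)
      = insert (-((n + 1 : ℕ) : ℤ)) (insert ((n + 1 : ℕ) : ℤ) (Icc (-(n : ℤ)) n)) := by
    ext k; simp only [mem_insert, mem_Icc]; omega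
  rw [hIcc, sum_insert (by simp; omega), sum_insert (by simp)]
  abel

section GeomSum

variable {K : Type*} [Field K]

lemma sum_Icc_neg_zpow (u : K) (hu : u ≠ 0) (n : ℕ) :
    ∑ k ∈ Finset.Icc (-(n : ℤ)) n, u ^ k
      = (∑ k ∈ Finset.range n, u ^ k) * u⁻¹ ^ n + u ^ n * ∑ k ∈ Finset.range n, u⁻¹ ^ k + 1 := by
  induction n with
  | zero => simp
  | succ n ih =>
    have huv : u * u⁻¹ = 1 := mul_inv_cancel₀ hu
    rw [Finset.sum_Icc_neg_natCast_succ, ih, geom_sum_succ, geom_sum_succ, zpow_neg, zpow_natCast,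
      ← inv_pow]
    linear_combination (-(∑ k ∈ Finset.range n, u ^ k) * u⁻¹ ^ n
      - u ^ n * ∑ k ∈ Finset.range n, u⁻¹ ^ k) * huv

lemma geom_sum_mul_geom_sum_inv (u : K) (hu : u ≠ 0) (n : ℕ) :
    (∑ k ∈ Finset.range n, u ^ k) * ∑ k ∈ Finset.range n, u⁻¹ ^ k
      = ∑ k ∈ Finset.Icc (-(n : ℤ)) n, ((n : K) - k.natAbs) * u ^ k := by
  induction n with
  | zero => simp
  | succ n ih =>
    have hweights : ∀ k ∈ Finset.Icc (-(n : ℤ)) n,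
        (((n + 1 : ℕ) : K) - k.natAbs) * u ^ k = ((n : K) - k.natAbs) * u ^ k + u ^ k := by
      intro k _; push_cast; ring
    have hpow : u ^ n * u⁻¹ ^ n = 1 := by rw [← mul_pow, mul_inv_cancel₀ hu, one_pow]
    rw [Finset.sum_Icc_neg_natCast_succ, Finset.sum_congr rfl hweights, Finset.sum_add_distrib,
      ← ih, sum_Icc_neg_zpow u hu, geom_sum_succ', geom_sum_succ']
    simp only [Int.natAbs_neg, Int.natAbs_natCast, sub_self, zero_mul, add_zero]
    linear_combination hpow

end GeomSum

lemma conj_exp_I_mul_ofReal (t : ℝ) : (starRingEnd ℂ) (cexp (I * t)) = (cexp (I * t))⁻¹ := by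
  rw [← Complex.exp_conj, ← Complex.exp_neg, map_mul, conj_I, conj_ofReal, neg_mul]

lemma natCast_mul_fejerKernel {n : ℕ} (hn : n ≠ 0) (t : ℝ) :
    (n : ℂ) * fejerKernel n t
      = (∑ k ∈ Finset.range n, cexp (I * t) ^ k)
        * (starRingEnd ℂ) (∑ k ∈ Finset.range n, cexp (I * t) ^ k) := by
  simp only [map_sum, map_pow, conj_exp_I_mul_ofReal]
  rw [geom_sum_mul_geom_sum_inv _ (Complex.exp_ne_zero _), fejerKernel, Finset.mul_sum]
  refine Finset.sum_congr rfl fun k _ => ?_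
  rw [show I * k * t = k * (I * t) by ring, exp_int_mul, ← mul_assoc]
  have habs : |(k : ℝ)| = k.natAbs := by rw [Nat.cast_natAbs, Int.cast_abs]
  rw [habs]
  push_cast
  field_simp

lemma norm_fejerKernel {n : ℕ} (hn : n ≠ 0) (t : ℝ) :
    ‖fejerKernel n t‖ = ‖∑ k ∈ Finset.range n, cexp (I * t) ^ k‖ ^ 2 / n := by
  have h := congrArg norm (natCast_mul_fejerKernel hn t)
  rw [norm_mul, norm_mul, RCLike.norm_conj, Complex.norm_natCast] at h
  rw [eq_div_iff (by positivity), sq, ← h, mul_comm]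

lemma norm_geom_sum_exp_I_mul_le (n : ℕ) (t : ℝ) :
    ‖∑ k ∈ Finset.range n, cexp (I * t) ^ k‖ ≤ n :=
  (norm_sum_le _ _).trans (by simp [norm_exp_I_mul_ofReal])

lemma norm_geom_sum_exp_I_mul_le_div {t : ℝ} (ht : t ∈ Ioc 0 π) (n : ℕ) :
    ‖∑ k ∈ Finset.range n, cexp (I * t) ^ k‖ ≤ π / t := by
  have hsin : 2 * (t / π) ≤ 2 * Real.sin (t / 2) := by
    have := mul_le_sin (x := t / 2) (by linarith [ht.1]) (by linarith [ht.2])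
    rw [show 2 / π * (t / 2) = t / π by ring] at this
    linarith
  have hden : ‖cexp (I * t) - 1‖ = 2 * Real.sin (t / 2) := by
    rw [norm_exp_I_mul_ofReal_sub_one, Real.norm_of_nonneg (by linarith [div_pos ht.1 pi_pos])]
  have hne : cexp (I * t) ≠ 1 := by
    rw [← sub_ne_zero, ← norm_ne_zero_iff, hden]
    linarith [div_pos ht.1 pi_pos]
  have hnum : ‖cexp (I * t) ^ n - 1‖ ≤ 2 := by
    refine (norm_sub_le _ _).trans ?_
    rw [norm_pow, norm_exp_I_mul_ofReal]
    norm_num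
  rw [geom_sum_eq hne, norm_div, hden]
  calc ‖cexp (I * t) ^ n - 1‖ / (2 * Real.sin (t / 2))
      ≤ 2 / (2 * (t / π)) := div_le_div₀ zero_le_two hnum (by positivity [ht.1]) hsin
    _ = π / t := by field_simp

lemma norm_fejerKernel_le {n : ℕ} (hn : n ≠ 0) (t : ℝ) : ‖fejerKernel n t‖ ≤ n := by
  rw [norm_fejerKernel hn, div_le_iff₀ (by positivity)]
  nlinarith [norm_geom_sum_exp_I_mul_le n t, norm_nonneg (∑ k ∈ Finset.range n, cexp (I * t) ^ k)]

lemma norm_fejerKernel_le_div_sq {n : ℕ} (hn : n ≠ 0) {t : ℝ} (ht : t ∈ Ioc 0 π) :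
    ‖fejerKernel n t‖ ≤ π ^ 2 / (n * t ^ 2) := by
  have := pow_le_pow_left₀ (norm_nonneg _) (norm_geom_sum_exp_I_mul_le_div ht n) 2
  rw [norm_fejerKernel hn, div_pow] at *
  calc _ ≤ π ^ 2 / t ^ 2 / n := by gcongr
    _ = _ := by rw [div_div, mul_comm]

lemma fejerKernel_neg (n : ℕ) (t : ℝ) : fejerKernel n (-t) = fejerKernel n t := by
  refine Finset.sum_nbij' (fun k => -k) (fun k => -k) ?_ ?_ (by simp) (by simp) fun k _ => ?_
  · intro k hk; simp only [Finset.mem_Icc] at hk ⊢; omega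
  · intro k hk; simp only [Finset.mem_Icc] at hk ⊢; omega
  · push_cast
    rw [abs_neg]
    ring_nf

lemma continuous_fejerKernel (n : ℕ) : Continuous (fejerKernel n) := by
  unfold fejerKernel
  fun_prop

lemma integral_exp_I_mul_int_mul {k : ℤ} (hk : k ≠ 0) :
    ∫ t in (-π)..π, cexp (I * k * t) = 0 := by
  have hperiod : cexp (I * k * π) = cexp (I * k * ↑(-π)) := by
    rw [show I * k * π = I * k * ↑(-π) + k * (2 * π * I) by push_cast; ring, Complex.exp_add,
      exp_int_mul_two_pi_mul_I, mul_one]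
  rw [integral_exp_mul_complex (by simp [hk, I_ne_zero]), hperiod, sub_self, zero_div]

lemma integral_fejerKernel (n : ℕ) : ∫ t in (-π)..π, fejerKernel n t = 2 * π := by
  unfold fejerKernel
  rw [intervalIntegral.integral_finsetSum fun k _ =>
      (by fun_prop : Continuous _).intervalIntegrable _ _,
    Finset.sum_eq_single_of_mem 0 (by simp) fun k _ hk => by
      rw [intervalIntegral.integral_const_mul, integral_exp_I_mul_int_mul hk, mul_zero]]
  simp only [Int.cast_zero, abs_zero, zero_div, sub_zero, ofReal_one, mul_zero, zero_mul,
    Complex.exp_zero, mul_one, intervalIntegral.integral_const, sub_neg_eq_add, real_smul]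
  push_cast
  ring

section ApproximateIdentity

variable {k g : ℝ → ℝ}

lemma integral_mul_le_mul_integral_of_le {a b M : ℝ} (hab : a ≤ b) (hg0 : ∀ t, 0 ≤ g t)
    (hg : IntervalIntegrable g volume a b) (hk : Continuous k) (hkM : ∀ t ∈ Icc a b, k t ≤ M) :
    ∫ t in a..b, k t * g t ≤ M * ∫ t in a..b, g t := by
  rw [← intervalIntegral.integral_const_mul]
  exact intervalIntegral.integral_mono_on hab (hg.continuousOn_mul hk.continuousOn) (hg.const_mul M)
    fun t ht => mul_le_mul_of_nonneg_right (hkM t ht) (hg0 t)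

lemma integral_mul_le_of_le_div_sq_of_integral_le {a C ε : ℝ} (ha : 0 < a) (hC : 0 ≤ C)
    (hg0 : ∀ t, 0 ≤ g t) (hg : ∀ a b, IntervalIntegrable g volume a b) (hk : Continuous k)
    (hk_decay : ∀ t ∈ Icc a (2 * a), k t ≤ C / t ^ 2)
    (hG : ∫ u in 0..2 * a, g u ≤ ε * (2 * a)) :
    ∫ t in a..2 * a, k t * g t ≤ 2 * C * ε / a := by
  have hk_le : ∀ t ∈ Icc a (2 * a), k t ≤ C / a ^ 2 := fun t ht =>
    (hk_decay t ht).trans (div_le_div_of_nonneg_left hC (by positivity) (by gcongr; exact ht.1))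
  calc ∫ t in a..2 * a, k t * g t
      ≤ C / a ^ 2 * ∫ t in a..2 * a, g t :=
        integral_mul_le_mul_integral_of_le (by linarith) hg0 (hg _ _) hk hk_le
    _ ≤ C / a ^ 2 * ∫ t in 0..2 * a, g t := by
        gcongr
        exact intervalIntegral.integral_mono_interval ha.le (by linarith) le_rfl (ae_of_all _ hg0)
          (hg _ _)
    _ ≤ C / a ^ 2 * (ε * (2 * a)) := by gcongr
    _ = 2 * C * ε / a := by field_simp

lemma integral_mul_le_of_le_div_sq_of_average_le {r C ε : ℝ} (J : ℕ) (hr : 0 < r) (hC : 0 ≤ C)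
    (hg0 : ∀ t, 0 ≤ g t) (hg : ∀ a b, IntervalIntegrable g volume a b) (hk : Continuous k)
    (hk_decay : ∀ t ∈ Icc r (2 ^ J * r), k t ≤ C / t ^ 2)
    (hG : ∀ s ∈ Ioc 0 (2 ^ J * r), ∫ u in 0..s, g u ≤ ε * s) :
    ∫ t in r..2 ^ J * r, k t * g t ≤ 4 * C * ε / r := by
  have hrJ : r ≤ 2 ^ J * r := le_mul_of_one_le_left hr.le (one_le_pow₀ one_le_two)
  have hε : 0 ≤ ε := nonneg_of_mul_nonneg_left
    ((intervalIntegral.integral_nonneg hr.le fun t _ => hg0 t).trans (hG r ⟨hr, hrJ⟩)) hr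
  have hsplit := intervalIntegral.sum_integral_adjacent_intervals (μ := volume)
    (f := fun t => k t * g t) (a := fun j => 2 ^ j * r) (n := J)
    fun j _ => (hg _ _).continuousOn_mul hk.continuousOn
  simp only [pow_zero, one_mul] at hsplit
  rw [← hsplit]
  have hpiece : ∀ j ∈ Finset.range J,
      ∫ t in 2 ^ j * r..2 ^ (j + 1) * r, k t * g t ≤ 2 * C * ε / r * (1 / 2) ^ j := by
    intro j hj
    have hjJ : 2 ^ (j + 1) * r ≤ 2 ^ J * r :=
      mul_le_mul_of_nonneg_right (pow_le_pow_right₀ one_le_two (Finset.mem_range.1 hj)) hr.le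
    have htwice : 2 ^ (j + 1) * r = 2 * (2 ^ j * r) := by ring
    rw [htwice] at hjJ ⊢
    calc _ ≤ 2 * C * ε / (2 ^ j * r) := by
          refine integral_mul_le_of_le_div_sq_of_integral_le (by positivity) hC hg0 hg hk
            (fun t ht => hk_decay t ⟨le_trans ?_ ht.1, ht.2.trans hjJ⟩) (hG _ ⟨by positivity, hjJ⟩)
          exact le_mul_of_one_le_left hr.le (one_le_pow₀ one_le_two)
      _ = 2 * C * ε / r * (1 / 2) ^ j := by rw [one_div_pow]; field_simp
  calc _ ≤ ∑ j ∈ Finset.range J, 2 * C * ε / r * (1 / 2) ^ j := Finset.sum_le_sum hpiece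
    _ = 2 * C * ε / r * ∑ j ∈ Finset.range J, (1 / 2 : ℝ) ^ j := (Finset.mul_sum ..).symm
    _ ≤ 2 * C * ε / r * 2 := by gcongr; exact sum_geometric_two_le J
    _ = 4 * C * ε / r := by ring

lemma integral_mul_le_of_le_of_le_div_sq {b C δ ε n : ℝ} (hC : 0 ≤ C) (hδ : 0 < δ) (hδb : δ ≤ b)
    (hnδ : 1 ≤ n * δ) (hg0 : ∀ t, 0 ≤ g t) (hg : ∀ a b, IntervalIntegrable g volume a b)
    (hk : Continuous k) (hk_le : ∀ t, k t ≤ n) (hk_decay : ∀ t ∈ Ioc 0 b, k t ≤ C / (n * t ^ 2))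
    (hG : ∀ s ∈ Ioc 0 δ, ∫ u in 0..s, g u ≤ ε * s) :
    ∫ t in 0..b, k t * g t ≤ (1 + 4 * C) * ε + 4 * C * (∫ t in 0..b, g t) / δ ^ 2 / n := by
  have hn : 0 < n := pos_of_mul_pos_left (by linarith) hδ.le
  obtain ⟨J, hJ, hJ'⟩ := exists_nat_pow_near hnδ one_lt_two
  set r := 1 / n with hr_def
  set s := 2 ^ J * r with hs_def
  have hr : 0 < r := by positivity
  have hs : 0 < s := by positivity
  have hrs : r ≤ s := le_mul_of_one_le_left hr.le (one_le_pow₀ one_le_two)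
  have hsδ : s ≤ δ := by rw [hs_def, hr_def, mul_one_div, div_le_iff₀ hn]; linarith
  have hδs : δ / 2 ≤ s := by
    rw [hs_def, hr_def, mul_one_div, le_div_iff₀ hn, pow_succ] at *; linarith
  have hkg : ∀ a b, IntervalIntegrable (fun t => k t * g t) volume a b :=
    fun a b => (hg a b).continuousOn_mul hk.continuousOn
  have hnear : ∫ t in 0..r, k t * g t ≤ ε :=
    calc _ ≤ n * ∫ t in 0..r, g t :=
          integral_mul_le_mul_integral_of_le hr.le hg0 (hg _ _) hk fun t _ => hk_le t
      _ ≤ n * (ε * r) := by gcongr; exact hG r ⟨hr, hrs.trans hsδ⟩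
      _ = ε := by rw [hr_def]; field_simp
  have hmid : ∫ t in r..s, k t * g t ≤ 4 * C * ε :=
    calc _ ≤ 4 * (C / n) * ε / r := by
          refine integral_mul_le_of_le_div_sq_of_average_le J hr (by positivity) hg0 hg hk
            (fun t ht => ?_) fun u hu => hG u ⟨hu.1, hu.2.trans hsδ⟩
          rw [div_div]
          exact hk_decay t ⟨hr.trans_le ht.1, ht.2.trans (hsδ.trans hδb)⟩
      _ = 4 * C * ε := by rw [hr_def]; field_simp
  have hfar : ∫ t in s..b, k t * g t ≤ 4 * C * (∫ t in 0..b, g t) / δ ^ 2 / n :=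
    calc _ ≤ C / (n * s ^ 2) * ∫ t in s..b, g t := by
          refine integral_mul_le_mul_integral_of_le (hsδ.trans hδb) hg0 (hg _ _) hk fun t ht => ?_
          exact (hk_decay t ⟨hs.trans_le ht.1, ht.2⟩).trans (by gcongr; exact ht.1)
      _ ≤ C / (n * (δ / 2) ^ 2) * ∫ t in 0..b, g t := by
          gcongr
          · exact intervalIntegral.integral_nonneg (hsδ.trans hδb) fun t _ => hg0 t
          · exact intervalIntegral.integral_mono_interval hs.le (hsδ.trans hδb) le_rfl
              (ae_of_all _ hg0) (hg _ _)
      _ = 4 * C * (∫ t in 0..b, g t) / δ ^ 2 / n := by field_simp; ring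
  rw [← intervalIntegral.integral_add_adjacent_intervals (hkg 0 r) (hkg r b),
    ← intervalIntegral.integral_add_adjacent_intervals (hkg r s) (hkg s b)]
  linarith

theorem tendsto_integral_mul_of_average_tendsto_zero {k : ℕ → ℝ → ℝ} {b C : ℝ} (hb : 0 < b)
    (hC : 0 ≤ C) (hg0 : ∀ t, 0 ≤ g t) (hg : ∀ a b, IntervalIntegrable g volume a b)
    (hg_avg : Tendsto (fun t => (1 / t) * ∫ u in 0..t, g u) (nhdsWithin 0 (Ioi 0)) (nhds 0))
    (hk : ∀ n, Continuous (k n)) (hk0 : ∀ n t, 0 ≤ k n t) (hk_le : ∀ n : ℕ, n ≠ 0 → ∀ t, k n t ≤ n)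
    (hk_decay : ∀ n : ℕ, n ≠ 0 → ∀ t ∈ Ioc 0 b, k n t ≤ C / (n * t ^ 2)) :
    Tendsto (fun n => ∫ t in 0..b, k n t * g t) atTop (nhds 0) := by
  refine tendsto_order.2 ⟨fun a ha => Eventually.of_forall fun n => ha.trans_le
    (intervalIntegral.integral_nonneg hb.le fun t _ => mul_nonneg (hk0 n t) (hg0 t)),
    fun a ha => ?_⟩
  set ε := a / (2 + 4 * C) with hε_def
  have hε : 0 < ε := by positivity
  obtain ⟨δ, hδ, hδb, hG⟩ : ∃ δ, 0 < δ ∧ δ ≤ b ∧ ∀ s ∈ Ioc 0 δ, ∫ u in 0..s, g u ≤ ε * s := by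
    obtain ⟨u, hu, hsub⟩ := mem_nhdsGT_iff_exists_Ioc_subset.1 (hg_avg.eventually (gt_mem_nhds hε))
    refine ⟨min u b, lt_min hu hb, min_le_right _ _, fun s hs => ?_⟩
    have hs_avg : (1 / s) * ∫ u in 0..s, g u < ε := hsub ⟨hs.1, hs.2.trans (min_le_left _ _)⟩
    rw [one_div_mul_eq_div, div_lt_iff₀ hs.1] at hs_avg
    exact hs_avg.le
  have htail := (tendsto_const_div_atTop_nhds_zero_nat
    (4 * C * (∫ t in 0..b, g t) / δ ^ 2)).eventually (gt_mem_nhds hε)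
  filter_upwards [htail, eventually_ge_atTop ⌈1 / δ⌉₊] with n hn_tail hn
  have hnδ : 1 ≤ n * δ := by rwa [← div_le_iff₀ hδ, ← Nat.ceil_le]
  have hn0 : n ≠ 0 := by rintro rfl; norm_num at hnδ
  calc _ ≤ (1 + 4 * C) * ε + 4 * C * (∫ t in 0..b, g t) / δ ^ 2 / n :=
        integral_mul_le_of_le_of_le_div_sq hC hδ hδb hnδ hg0 hg (hk n) (hk_le n hn0)
          (hk_decay n hn0) hG
    _ < (1 + 4 * C) * ε + ε := by linarith
    _ = a := by rw [hε_def]; field_simp; ring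

end ApproximateIdentity

lemma integral_neg_to_eq_integral_add_comp_neg {E : Type*} [NormedAddCommGroup E]
    [NormedSpace ℝ E] {h : ℝ → E} {a : ℝ} (hneg : IntervalIntegrable h volume (-a) 0)
    (hpos : IntervalIntegrable h volume 0 a) :
    ∫ t in (-a)..a, h t = ∫ t in 0..a, (h t + h (-t)) := by
  have hcomp : IntervalIntegrable (fun t => h (-t)) volume 0 a := by
    simpa using (IntervalIntegrable.iff_comp_neg (by finiteness)).1 hneg.symm
  rw [intervalIntegral.integral_add hpos hcomp, intervalIntegral.integral_comp_neg, neg_zero,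
    add_comm, intervalIntegral.integral_add_adjacent_intervals hneg hpos]

lemma norm_fejerKernel_mean_sub_le {f : ℝ → ℂ} {x : ℝ}
    (hfx : ∀ a b, IntervalIntegrable (fun t => f (x - t)) volume a b) (L : ℂ) (n : ℕ) :
    ‖(1 / (2 * π) : ℝ) • (∫ t in (-π)..π, fejerKernel n t * f (x - t)) - L‖
      ≤ 1 / (2 * π) * ∫ t in 0..π, ‖fejerKernel n t‖ * ‖f (x + t) + f (x - t) - 2 * L‖ := by
  have hKf : ∀ a b, IntervalIntegrable (fun t => fejerKernel n t * f (x - t)) volume a b :=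
    fun a b => (hfx a b).continuousOn_mul (continuous_fejerKernel n).continuousOn
  have hKL : ∀ a b, IntervalIntegrable (fun t => fejerKernel n t * L) volume a b :=
    fun a b => intervalIntegrable_const.continuousOn_mul (continuous_fejerKernel n).continuousOn
  have hL : L = (1 / (2 * π) : ℝ) • ∫ t in (-π)..π, fejerKernel n t * L := by
    rw [intervalIntegral.integral_mul_const, integral_fejerKernel, Complex.real_smul, ← mul_assoc]
    push_cast
    field_simp
  have hfold : (∫ t in (-π)..π, fejerKernel n t * f (x - t)) - ∫ t in (-π)..π, fejerKernel n t * L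
      = ∫ t in 0..π, fejerKernel n t * (f (x + t) + f (x - t) - 2 * L) := by
    rw [← intervalIntegral.integral_sub (hKf _ _) (hKL _ _),
      integral_neg_to_eq_integral_add_comp_neg ((hKf _ _).sub (hKL _ _)) ((hKf _ _).sub (hKL _ _))]
    refine intervalIntegral.integral_congr fun t _ => ?_
    rw [fejerKernel_neg, sub_neg_eq_add]
    ring
  conv_lhs => rw [hL]
  rw [← smul_sub, hfold, norm_smul, Real.norm_of_nonneg (by positivity)]
  gcongr
  refine (intervalIntegral.norm_integral_le_integral_norm pi_pos.le).trans_eq ?_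
  simp only [norm_mul]

/-- Pointwise Fejér summability: if `f ∈ L¹(T)`, `x ∈ T` and `L ∈ ℂ` satisfy
`(1/t) ∫_0^t |f(x+u) + f(x-u) - 2L| du → 0` as `t → 0⁺`, then `(K_n * f)(x) → L`,
where `(K_n * f)(x) = (1/(2π)) ∫_{-π}^{π} K_n(t) f(x - t) dt`. -/
theorem fejer_summability_pointwise (f : ℝ → ℂ) (hper : Function.Periodic f (2 * π))
    (hf : IntegrableOn f (Ioc (-π) π)) (x : ℝ) (L : ℂ)
    (hx : Tendsto (fun t : ℝ => (1 / t) * ∫ u in (0 : ℝ)..t, ‖f (x + u) + f (x - u) - 2 * L‖)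
      (nhdsWithin 0 (Ioi 0)) (nhds 0)) :
    Tendsto (fun n : ℕ => (1 / (2 * π) : ℝ) • ∫ t in (-π)..π, fejerKernel n t * f (x - t))
      atTop (nhds L) := by
  have hfI : ∀ a b, IntervalIntegrable f volume a b := by
    refine hper.intervalIntegrable (t := -π) (by positivity) ?_
    rwa [show -π + 2 * π = π by ring,
      intervalIntegrable_iff_integrableOn_Ioc_of_le (by linarith [pi_pos])]
  have hplus : ∀ a b, IntervalIntegrable (fun u => f (x + u)) volume a b := fun a b => by
    simpa using (hfI (x + a) (x + b)).comp_add_left x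
  have hminus : ∀ a b, IntervalIntegrable (fun u => f (x - u)) volume a b := fun a b => by
    simpa using (hfI (x - a) (x - b)).comp_sub_left x
  have hg : ∀ a b,
      IntervalIntegrable (fun u => ‖f (x + u) + f (x - u) - 2 * L‖) volume a b := fun a b =>
    (((hplus a b).add (hminus a b)).sub intervalIntegrable_const).norm
  have hlim := tendsto_integral_mul_of_average_tendsto_zero (k := fun n t => ‖fejerKernel n t‖)
    pi_pos (sq_nonneg π) (fun _ => norm_nonneg _) hg hx (fun n => (continuous_fejerKernel n).norm)
    (fun _ _ => norm_nonneg _) (fun _ hn t => norm_fejerKernel_le hn t)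
    (fun _ hn _ ht => norm_fejerKernel_le_div_sq hn ht)
  rw [tendsto_iff_norm_sub_tendsto_zero]
  refine squeeze_zero (fun _ => norm_nonneg _) (fun n => norm_fejerKernel_mean_sub_le hminus L n) ?_
  simpa using hlim.const_mul (1 / (2 * π))
end
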